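/- Let N > 0 and let x : ZMod N → ℂ be of the form x[n] = c₀ + c₁ exp(2πi f n/N) + conj(c₁) exp(−2πi f n/N) (a constant plus a real sinusoid at frequency f), and let S ⊆ ZMod N be the support of an indicator aperture A = 𝟙_S with 0 ∈ S, f ∉ S, −f ∉ S, but f ∈ S − S. Then the coherently filtered specular image F⁻¹[A ⊙ F(x)] is constant (the sinusoid is lost), while the speckle-averaged intensity F⁻¹[R_A ⊙ F(|x|²)] has a nonzero Fourier coefficient at frequency f (the sinusoid is recovered). -/
import Mathlib

open Complex Finset

/-- The DFT character `e(m) = exp(2πi m / N)` on `ZMod N`. -/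
noncomputable def zmodChar (N : ℕ) (m : ZMod N) : ℂ :=
  Complex.exp (2 * Real.pi * Complex.I * m.val / N)

/-- DFT: `F f[n] = ∑ m, f[m] exp(-2πi m n / N)`. -/
noncomputable def DFT {N : ℕ} [NeZero N] (f : ZMod N → ℂ) (n : ZMod N) : ℂ :=
  ∑ m : ZMod N, f m * zmodChar N (-(m * n))

/-- Inverse DFT: `F⁻¹ A[k] = (1/N) ∑ n, A[n] exp(2πi n k / N)`. -/
noncomputable def invDFT {N : ℕ} [NeZero N] (A : ZMod N → ℂ) (k : ZMod N) : ℂ :=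
  (N : ℂ)⁻¹ * ∑ n : ZMod N, A n * zmodChar N (n * k)

/-- Autocorrelation `R_A[m] = ∑ n, A[n] conj(A[n-m])` on `ZMod N`. -/
noncomputable def autocorr {N : ℕ} [NeZero N] (A : ZMod N → ℂ) (m : ZMod N) : ℂ :=
  ∑ n : ZMod N, A n * starRingEnd ℂ (A (n - m))

lemma zmodChar_eq_stdAddChar {N : ℕ} [NeZero N] (m : ZMod N) :
    zmodChar N m = ZMod.stdAddChar m := by
  rw [ZMod.stdAddChar_apply, ZMod.toCircle_apply, zmodChar]

lemma zmodChar_zero {N : ℕ} [NeZero N] : zmodChar N 0 = 1 := by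
  rw [zmodChar_eq_stdAddChar]; exact AddChar.map_zero_eq_one _

lemma zmodChar_add {N : ℕ} [NeZero N] (a b : ZMod N) :
    zmodChar N (a + b) = zmodChar N a * zmodChar N b := by
  simp only [zmodChar_eq_stdAddChar]; exact AddChar.map_add_eq_mul _ a b

/-- Orthogonality: the sum of the character over all of `ZMod N`. -/
lemma sum_zmodChar {N : ℕ} [NeZero N] (k : ZMod N) :
    ∑ m : ZMod N, zmodChar N (m * k) = if k = 0 then (N : ℂ) else 0 := by
  simp only [zmodChar_eq_stdAddChar]
  by_cases hk : k = 0
  · simp [hk, ZMod.card]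
  · simp only [hk, if_false]
    have h := ZMod.isPrimitive_stdAddChar N hk
    have := AddChar.sum_eq_zero_of_ne_one h
    simpa only [AddChar.mulShift_apply, mul_comm k] using this

/-- Speckle recovers frequencies between subapertures.  Let the scene be a
constant plus a real sinusoid at frequency `f`, and let `A = 𝟙_S` be an
indicator aperture with `0 ∈ S` but `f ∉ S`, `-f ∉ S`, while `f ∈ S - S`.
Assume the albedo `|x|²` has a nonzero Fourier coefficient at `f`.  Then the
coherently filtered specular image `F⁻¹[A ⊙ F(x)]` is constant (the sinusoid
is lost), while the speckle-averaged intensity `F⁻¹[R_A ⊙ F(|x|²)]` has a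
nonzero Fourier coefficient at `f` (the sinusoid is recovered). -/
theorem speckle_recovers_gap_frequency
    {N : ℕ} [NeZero N] (f : ZMod N) (c₀ c₁ : ℂ) (hc₀ : c₀ ≠ 0) (hc₁ : c₁ ≠ 0)
    (S : Finset (ZMod N))
    (x : ZMod N → ℂ)
    (hx : x = fun n => c₀ + c₁ * zmodChar N (f * n)
        + starRingEnd ℂ c₁ * zmodChar N (-(f * n)))
    (A : ZMod N → ℂ) (hA : A = fun n => if n ∈ S then (1 : ℂ) else 0)
    (h0S : (0 : ZMod N) ∈ S) (hfS : f ∉ S) (hnfS : -f ∉ S)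
    (hfdiff : ∃ s ∈ S, ∃ s' ∈ S, f = s - s')
    (halbedo : DFT (fun j => (‖x j‖ ^ 2 : ℂ)) f ≠ 0) :
    (∃ C : ℂ, ∀ n : ZMod N, invDFT (fun k => A k * DFT x k) n = C)
    ∧ DFT (invDFT (fun m => autocorr A m * DFT (fun j => (‖x j‖ ^ 2 : ℂ)) m)) f ≠ 0 := by
  have hN : (N : ℂ) ≠ 0 := Nat.cast_ne_zero.mpr (NeZero.ne N)
  -- DFT of x
  have hDFTx : ∀ k : ZMod N, DFT x k =
      (if k = 0 then (N : ℂ) else 0) * c₀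
      + (if f - k = 0 then (N : ℂ) else 0) * c₁
      + (if -f - k = 0 then (N : ℂ) else 0) * starRingEnd ℂ c₁ := by
    intro k
    rw [DFT, hx]
    have : ∀ m : ZMod N,
        (c₀ + c₁ * zmodChar N (f * m) + starRingEnd ℂ c₁ * zmodChar N (-(f * m)))
          * zmodChar N (-(m * k))
        = c₀ * zmodChar N (m * (-k)) + c₁ * zmodChar N (m * (f - k))
          + starRingEnd ℂ c₁ * zmodChar N (m * (-f - k)) := by
      intro m
      have h1 : f * m + -(m * k) = m * (f - k) := by ring
      have h2 : -(f * m) + -(m * k) = m * (-f - k) := by ring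
      rw [add_mul, add_mul, mul_assoc, mul_assoc, ← zmodChar_add, ← zmodChar_add, h1, h2]
      congr 2
      have h0 : (0 : ZMod N) + -(m * k) = m * (-k) := by ring
      calc c₀ * zmodChar N (-(m * k)) = c₀ * (zmodChar N 0 * zmodChar N (-(m * k))) := by
            rw [zmodChar_zero, one_mul]
        _ = c₀ * zmodChar N (m * (-k)) := by rw [← zmodChar_add, h0]
    simp only [this]
    rw [Finset.sum_add_distrib, Finset.sum_add_distrib, ← Finset.mul_sum, ← Finset.mul_sum,
      ← Finset.mul_sum, sum_zmodChar, sum_zmodChar, sum_zmodChar]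
    have hk0 : (-k = 0) ↔ (k = 0) := neg_eq_zero
    simp only [hk0]
    ring
  -- f, -f nonzero
  have hf0 : f ≠ 0 := fun h => hfS (h ▸ h0S)
  have hnf0 : -f ≠ 0 := fun h => hnfS (h ▸ h0S)
  constructor
  · -- coherent image is constant
    refine ⟨c₀, fun n => ?_⟩
    have hAk : ∀ k : ZMod N, A k * DFT x k = if k = 0 then c₀ * N else 0 := by
      intro k
      by_cases hk : k = 0
      · subst hk
        rw [hA]
        simp only [h0S, if_true, one_mul, hDFTx]
        have h1 : f - 0 = f := by ring
        have h2 : -f - 0 = -f := by ring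
        rw [h1, h2]
        simp [hf0, hnf0, mul_comm]
      · simp only [hk, if_false]
        by_cases hkS : k ∈ S
        · have hkf : f - k ≠ 0 := fun h => hfS (by rw [sub_eq_zero.mp h]; exact hkS)
          have hknf : -f - k ≠ 0 := fun h => hnfS (by rw [sub_eq_zero.mp h]; exact hkS)
          rw [hDFTx]
          simp [hk, hkf, hknf]
        · rw [hA]; simp [hkS]
    rw [invDFT]
    simp only [hAk, ite_mul, zero_mul]
    rw [Finset.sum_ite_eq' Finset.univ (0 : ZMod N) (fun k => (c₀ * N) * zmodChar N (k * n))]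
    simp only [Finset.mem_univ, if_true, zero_mul, zmodChar_zero, mul_one]
    field_simp
  · -- speckle recovers frequency f
    -- Fourier inversion: DFT (invDFT g) f = g f
    have hinv : ∀ g : ZMod N → ℂ, DFT (invDFT g) f = g f := by
      intro g
      rw [DFT]
      have step : ∀ n : ZMod N, invDFT g n * zmodChar N (-(n * f))
          = (N : ℂ)⁻¹ * ∑ m : ZMod N, g m * zmodChar N (n * (m - f)) := by
        intro n
        rw [invDFT, mul_assoc, Finset.sum_mul]
        congr 1
        refine Finset.sum_congr rfl fun m _ => ?_
        rw [mul_assoc, ← zmodChar_add]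
        congr 2
        ring
      simp only [step]
      rw [← Finset.mul_sum, Finset.sum_comm]
      have step2 : ∀ m : ZMod N, ∑ n : ZMod N, g m * zmodChar N (n * (m - f))
          = if m = f then g m * N else 0 := by
        intro m
        rw [← Finset.mul_sum, sum_zmodChar]
        by_cases h : m = f
        · simp [h]
        · have : m - f ≠ 0 := fun hh => h (sub_eq_zero.mp hh)
          simp [h, this]
      simp only [step2]
      rw [Finset.sum_ite_eq' Finset.univ f (fun m => g m * N)]
      simp only [Finset.mem_univ, if_true]
      field_simp
    rw [hinv]
    refine mul_ne_zero ?_ halbedo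
    -- autocorrelation at f is a positive count
    have hac : autocorr A f
        = ((Finset.univ.filter (fun n : ZMod N => n ∈ S ∧ n - f ∈ S)).card : ℂ) := by
      rw [autocorr, hA]
      have hterm : ∀ n : ZMod N,
          (if n ∈ S then (1:ℂ) else 0) * starRingEnd ℂ (if n - f ∈ S then (1:ℂ) else 0)
          = if n ∈ S ∧ n - f ∈ S then 1 else 0 := by
        intro n
        by_cases h1 : n ∈ S <;> by_cases h2 : n - f ∈ S <;> simp [h1, h2]
      simp only [hterm]
      rw [Finset.sum_boole]
    rw [hac]
    obtain ⟨s, hs, s', hs', hfss⟩ := hfdiff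
    have hmem : s ∈ Finset.univ.filter (fun n : ZMod N => n ∈ S ∧ n - f ∈ S) := by
      refine Finset.mem_filter.mpr ⟨Finset.mem_univ _, hs, ?_⟩
      rw [hfss]
      simpa using hs'
    exact Nat.cast_ne_zero.mpr (Finset.card_ne_zero_of_mem hmem)
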